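/- arXiv:1003.2710 — 2 statements merged into one kernel-verified Lean document; each statement's English description precedes it below -/
import Mathlib

section
/- Let k > 2 be an integer. The trivariate generating function W_k(x,y,w) = ∑_{s,u₁,u₂} i_k(s,u₁,u₂) x^s y^{u₁} w^{u₂} satisfies the partial differential equation ∂W_k/∂w = (x + x²) · ∂W_k/∂y, as an identity of formal power series in x, y, w (with formal partial derivatives). -/
open scoped Classical

namespace ModularDiagrams

/-- A diagram over `n` vertices: a set of arcs `(i,j)` with `1 ≤ i < j ≤ n`,
pairwise vertex-disjoint (every vertex has degree at most one). -/
def IsDiagram (n : ℕ) (A : Finset (ℕ × ℕ)) : Prop :=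
  (∀ a ∈ A, 1 ≤ a.1 ∧ a.1 < a.2 ∧ a.2 ≤ n) ∧
  (∀ a ∈ A, ∀ b ∈ A, a ≠ b →
    a.1 ≠ b.1 ∧ a.1 ≠ b.2 ∧ a.2 ≠ b.1 ∧ a.2 ≠ b.2)

/-- `A` contains a `k`-crossing: `k` distinct arcs
`(i₁,j₁),…,(i_k,j_k)` with `i₁<⋯<i_k<j₁<⋯<j_k`. -/
def HasKCrossing (k : ℕ) (A : Finset (ℕ × ℕ)) : Prop :=
  ∃ f : Fin k → ℕ × ℕ, (∀ i, f i ∈ A) ∧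
    (∀ i j : Fin k, i < j → (f i).1 < (f j).1) ∧
    (∀ i j : Fin k, i < j → (f i).2 < (f j).2) ∧
    (∀ i j : Fin k, (f i).1 < (f j).2)

/-- A `k`-noncrossing diagram over `n` vertices. -/
def IsKNoncrossing (k n : ℕ) (A : Finset (ℕ × ℕ)) : Prop :=
  IsDiagram n A ∧ ¬ HasKCrossing k A

/-- No isolated vertices among `1,…,n`. -/
def IsMatchingOn (n : ℕ) (A : Finset (ℕ × ℕ)) : Prop :=
  ∀ v : ℕ, 1 ≤ v → v ≤ n → ∃ a ∈ A, v = a.1 ∨ v = a.2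

/-- A diagram is modular if every arc has length at least four and every arc
lies in a stack of length at least two (i.e. has a parallel neighbour). -/
def IsModular (A : Finset (ℕ × ℕ)) : Prop :=
  ∀ a ∈ A, a.1 + 4 ≤ a.2 ∧ ((a.1 + 1, a.2 - 1) ∈ A ∨ (a.1 - 1, a.2 + 1) ∈ A)

/-- `Q_k(n)`: the number of modular `k`-noncrossing diagrams over `n` vertices. -/
noncomputable def Qk (k n : ℕ) : ℕ :=
  Nat.card {A : Finset (ℕ × ℕ) // IsKNoncrossing k n A ∧ IsModular A}

/-- `f_k(2n)`: the number of `k`-noncrossing matchings over `2n` vertices. -/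
noncomputable def fk (k n : ℕ) : ℕ :=
  Nat.card {A : Finset (ℕ × ℕ) // IsKNoncrossing k (2 * n) A ∧ IsMatchingOn (2 * n) A}

/-- A `V_k`-shape over `n` vertices: a `k`-noncrossing matching, all of whose
stacks have length exactly one. -/
def IsShape (k n : ℕ) (A : Finset (ℕ × ℕ)) : Prop :=
  IsKNoncrossing k n A ∧ IsMatchingOn n A ∧ ∀ a ∈ A, (a.1 + 1, a.2 - 1) ∉ A

def Is1Arc (a : ℕ × ℕ) : Prop := a.2 = a.1 + 1

def Is2Arc (a : ℕ × ℕ) : Prop := a.2 = a.1 + 2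

/-- Two arcs cross. -/
def Crosses (a b : ℕ × ℕ) : Prop :=
  (a.1 < b.1 ∧ b.1 < a.2 ∧ a.2 < b.2) ∨ (b.1 < a.1 ∧ a.1 < b.2 ∧ b.2 < a.2)

/-- The number of `1`-arcs (class `C₁`). -/
noncomputable def countC1 (A : Finset (ℕ × ℕ)) : ℕ := (A.filter Is1Arc).card

/-- The number of pairs of mutually crossing `2`-arcs (class `C₂`);
each unordered pair is counted once, via its left member. -/
noncomputable def countC2 (A : Finset (ℕ × ℕ)) : ℕ :=
  ((A ×ˢ A).filter (fun p => Is2Arc p.1 ∧ Is2Arc p.2 ∧ p.1.1 < p.2.1 ∧ Crosses p.1 p.2)).card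

/-- The number of `C₃`-elements: pairs `(α,β)` where `β` has length at least
three and `α` is the unique `2`-arc crossing `β`. -/
noncomputable def countC3 (A : Finset (ℕ × ℕ)) : ℕ :=
  (A.filter (fun b => b.1 + 3 ≤ b.2 ∧ ∃! a, a ∈ A ∧ Is2Arc a ∧ Crosses a b)).card

/-- The number of `C₄`-elements: triples `(α₁,β,α₂)` with `α₁ ≠ α₂` two
`2`-arcs both crossing `β`; counted via `β`. -/
noncomputable def countC4 (A : Finset (ℕ × ℕ)) : ℕ :=
  (A.filter (fun b => ∃ a₁ ∈ A, ∃ a₂ ∈ A, a₁ ≠ a₂ ∧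
      Is2Arc a₁ ∧ Is2Arc a₂ ∧ Crosses a₁ b ∧ Crosses a₂ b)).card

/-- `i_k(s,m)`: the number of `V_k`-shapes with `s` arcs, `m` of which are `1`-arcs. -/
noncomputable def ik2 (k s m : ℕ) : ℕ :=
  Nat.card {A : Finset (ℕ × ℕ) // IsShape k (2 * s) A ∧ A.card = s ∧ countC1 A = m}

/-- `i_k(s,u₁,u₂)`: `V_k`-shapes with `s` arcs, `u₁` `1`-arcs, `u₂` pairs of
mutually crossing `2`-arcs. -/
noncomputable def ik3 (k s u₁ u₂ : ℕ) : ℕ :=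
  Nat.card {A : Finset (ℕ × ℕ) //
    IsShape k (2 * s) A ∧ A.card = s ∧ countC1 A = u₁ ∧ countC2 A = u₂}

/-- `i_k(s,u₁,u₂,u₃,u₄)`: `V_k`-shapes with `s` arcs and `u_i` elements of class
`C_i`, `i = 1,2,3,4`.  -/
noncomputable def ik5 (k s u₁ u₂ u₃ u₄ : ℕ) : ℕ :=
  Nat.card {A : Finset (ℕ × ℕ) //
    IsShape k (2 * s) A ∧ A.card = s ∧ countC1 A = u₁ ∧ countC2 A = u₂ ∧
      countC3 A = u₃ ∧ countC4 A = u₄}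

/-- `i_k` with integer arguments, vanishing when some argument is negative. -/
noncomputable def ik5' (k : ℕ) (s u₁ u₂ u₃ u₄ : ℤ) : ℕ :=
  if 0 ≤ s ∧ 0 ≤ u₁ ∧ 0 ≤ u₂ ∧ 0 ≤ u₃ ∧ 0 ≤ u₄ then
    ik5 k s.toNat u₁.toNat u₂.toNat u₃.toNat u₄.toNat
  else 0

/-- `b` is strictly nested in `a`. -/
def Nested (a b : ℕ × ℕ) : Prop := a.1 < b.1 ∧ b.2 < a.2

/-- `b` is the successor of `a` inside a common stem of the diagram `A`:
`b` is nested in `a` and every arc of `A` nested in `a` is contained in or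
nested in (the stack of) `b`. -/
def StemStep (A : Finset (ℕ × ℕ)) (a b : ℕ × ℕ) : Prop :=
  a ∈ A ∧ b ∈ A ∧ Nested a b ∧ ∀ c ∈ A, Nested a c → b.1 ≤ c.1 ∧ c.2 ≤ b.2

/-- The outermost arcs of the stems of `A`. -/
noncomputable def stemTops (A : Finset (ℕ × ℕ)) : Finset (ℕ × ℕ) :=
  A.filter (fun b => ¬ ∃ a ∈ A, StemStep A a b)

/-- The vertices used by a set of arcs. -/
noncomputable def vertexSet (B : Finset (ℕ × ℕ)) : Finset ℕ :=
  B.image Prod.fst ∪ B.image Prod.snd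

/-- The rank (1-based) of `v` within the finite vertex set `V`. -/
noncomputable def rank (V : Finset ℕ) (v : ℕ) : ℕ := (V.filter (· ≤ v)).card

/-- The shape of a diagram: replace every stem by a single arc (its outermost
arc) and delete all isolated vertices, relabelling the remaining vertices in
increasing order. -/
noncomputable def shapeOf (A : Finset (ℕ × ℕ)) : Finset (ℕ × ℕ) :=
  (stemTops A).image
    (fun a => (rank (vertexSet (stemTops A)) a.1, rank (vertexSet (stemTops A)) a.2))

/-- The ordinary generating function `F_k(z) = ∑_{n≥0} f_k(2n) zⁿ`. -/
noncomputable def FkPS (k : ℕ) : PowerSeries ℚ := PowerSeries.mk fun n => (fk k n : ℚ)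

/-- Composition `F_k(g)` for a power series `g` with zero constant term:
the coefficient of `zⁿ` is `∑_{m=0}^{n} f_k(2m) [zⁿ] gᵐ` (higher powers of `g`
do not contribute since `g` has zero constant term). -/
noncomputable def FkComp (k : ℕ) (g : PowerSeries ℚ) : PowerSeries ℚ :=
  PowerSeries.mk fun n =>
    ∑ m ∈ Finset.range (n + 1), (fk k m : ℚ) * PowerSeries.coeff n (g ^ m)

/-- Composition `F_k(g)` for a multivariate power series `g` with zero constant
term: the coefficient of the monomial `d` is `∑_{m=0}^{|d|} f_k(2m) [d] gᵐ`. -/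
noncomputable def FkCompMv {σ : Type} (k : ℕ) (g : MvPowerSeries σ ℚ) :
    MvPowerSeries σ ℚ :=
  fun d => ∑ m ∈ Finset.range (d.sum (fun _ e => e) + 1),
    (fk k m : ℚ) * MvPowerSeries.coeff d (g ^ m)

/-- Formal partial derivative of a multivariate power series. -/
noncomputable def mvDeriv {σ : Type} (i : σ) (f : MvPowerSeries σ ℚ) :
    MvPowerSeries σ ℚ :=
  fun d => ((d i : ℚ) + 1) * MvPowerSeries.coeff (d + Finsupp.single i 1) f

end ModularDiagrams
/-!
Mark a pair of crossing `2`-arcs `(j, j+2), (j+1, j+3)` of a `V_k`-shape. If the arc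
`(j-1, j+4)` is absent, replacing the four vertices `j, …, j+3` by a single `1`-arc gives a
`V_k`-shape with one arc less, one `1`-arc more, one crossing pair less, and a marked `1`-arc;
if it is present, the six vertices `j-1, …, j+4` collapse to a `1`-arc and two arcs are lost.
Both operations exchange a block of consecutive vertices for another block. The arcs of a block
cross no arc outside it, and a block holds no `3`-crossing, so for `k > 2` being a `V_k`-shape
and the numbers of `1`-arcs and of crossing pairs outside the block pass through the exchange.
Hence both operations are bijections, which gives
`(u₂+1) i_k(s,u₁,u₂+1) = (u₁+1) i_k(s-1,u₁+1,u₂) + (u₁+1) i_k(s-2,u₁+1,u₂)`,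
the coefficientwise form of the equation.
-/

namespace ModularDiagrams

open Finset

section Arcs

def VertexDisjoint (A : Finset (ℕ × ℕ)) : Prop :=
  ∀ a ∈ A, ∀ b ∈ A, a ≠ b → a.1 ≠ b.1 ∧ a.1 ≠ b.2 ∧ a.2 ≠ b.1 ∧ a.2 ≠ b.2

def IsPerfectMatching (V : Finset ℕ) (A : Finset (ℕ × ℕ)) : Prop :=
  (∀ a ∈ A, a.1 < a.2 ∧ a.1 ∈ V ∧ a.2 ∈ V) ∧ VertexDisjoint A ∧
    ∀ v ∈ V, ∃ a ∈ A, v = a.1 ∨ v = a.2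

def StackFree (A : Finset (ℕ × ℕ)) : Prop := ∀ a ∈ A, (a.1 + 1, a.2 - 1) ∉ A

lemma isShape_iff {k n : ℕ} {A : Finset (ℕ × ℕ)} :
    IsShape k n A ↔ IsPerfectMatching (Icc 1 n) A ∧ ¬ HasKCrossing k A ∧ StackFree A := by
  simp only [IsShape, IsKNoncrossing, IsDiagram, IsMatchingOn, IsPerfectMatching,
    VertexDisjoint, StackFree, mem_Icc]
  constructor
  · rintro ⟨⟨⟨hA, hd⟩, hk⟩, hm, hs⟩
    exact ⟨⟨fun a ha => by have := hA a ha; omega, hd, fun v hv => hm v hv.1 hv.2⟩, hk, hs⟩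
  · rintro ⟨⟨hA, hd, hm⟩, hk, hs⟩
    exact ⟨⟨⟨fun a ha => by have := hA a ha; omega, hd⟩, hk⟩,
      fun v h1 h2 => hm v ⟨h1, h2⟩, hs⟩

lemma VertexDisjoint.mono {A B : Finset (ℕ × ℕ)} (hA : VertexDisjoint A) (hBA : B ⊆ A) :
    VertexDisjoint B :=
  fun a ha b hb => hA a (hBA ha) b (hBA hb)

lemma VertexDisjoint.union {P S : Finset (ℕ × ℕ)} (hP : VertexDisjoint P) (hS : VertexDisjoint S)
    (hPS : ∀ a ∈ P, ∀ b ∈ S, a.1 ≠ b.1 ∧ a.1 ≠ b.2 ∧ a.2 ≠ b.1 ∧ a.2 ≠ b.2) :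
    VertexDisjoint (P ∪ S) := by
  intro a ha b hb hab
  rcases mem_union.1 ha with ha | ha <;> rcases mem_union.1 hb with hb | hb
  · exact hP a ha b hb hab
  · exact hPS a ha b hb
  · have := hPS b hb a ha; omega
  · exact hS a ha b hb hab

lemma isPerfectMatching_union_iff {V W : Finset ℕ} {P S : Finset (ℕ × ℕ)} (hVW : Disjoint V W)
    (hP : ∀ a ∈ P, a.1 ∈ V ∧ a.2 ∈ V) (hS : ∀ a ∈ S, a.1 ∉ V ∧ a.2 ∉ V) :
    IsPerfectMatching (V ∪ W) (P ∪ S) ↔ IsPerfectMatching V P ∧ IsPerfectMatching W S := by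
  constructor
  · rintro ⟨harc, hdisj, hcov⟩
    refine ⟨⟨fun a ha => ⟨(harc a (mem_union_left _ ha)).1, hP a ha⟩,
        hdisj.mono subset_union_left, fun v hv => ?_⟩,
      ⟨fun a ha => ?_, hdisj.mono subset_union_right, fun v hv => ?_⟩⟩
    · obtain ⟨a, ha, hva⟩ := hcov v (mem_union_left _ hv)
      refine ⟨a, (mem_union.1 ha).resolve_right fun haS => ?_, hva⟩
      rcases hva with rfl | rfl
      exacts [(hS a haS).1 hv, (hS a haS).2 hv]
    · obtain ⟨hlt, h1, h2⟩ := harc a (mem_union_right _ ha)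
      exact ⟨hlt, (mem_union.1 h1).resolve_left (hS a ha).1,
        (mem_union.1 h2).resolve_left (hS a ha).2⟩
    · obtain ⟨a, ha, hva⟩ := hcov v (mem_union_right _ hv)
      refine ⟨a, (mem_union.1 ha).resolve_left fun haP => disjoint_left.1 hVW ?_ hv, hva⟩
      rcases hva with rfl | rfl
      exacts [(hP a haP).1, (hP a haP).2]
  · rintro ⟨⟨hPa, hPd, hPc⟩, ⟨hSa, hSd, hSc⟩⟩
    refine ⟨fun a ha => ?_, hPd.union hSd fun a ha b hb => ?_, fun v hv => ?_⟩
    · rcases mem_union.1 ha with ha | ha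
      · exact ⟨(hPa a ha).1, mem_union_left _ (hPa a ha).2.1, mem_union_left _ (hPa a ha).2.2⟩
      · exact ⟨(hSa a ha).1, mem_union_right _ (hSa a ha).2.1, mem_union_right _ (hSa a ha).2.2⟩
    · obtain ⟨h1, h2⟩ := hP a ha
      obtain ⟨h3, h4⟩ := hS b hb
      refine ⟨?_, ?_, ?_, ?_⟩ <;> rintro h <;> simp_all
    · rcases mem_union.1 hv with hv | hv
      · obtain ⟨a, ha, h⟩ := hPc v hv; exact ⟨a, mem_union_left _ ha, h⟩
      · obtain ⟨a, ha, h⟩ := hSc v hv; exact ⟨a, mem_union_right _ ha, h⟩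

lemma crosses_comm {a b : ℕ × ℕ} : Crosses a b ↔ Crosses b a := by
  unfold Crosses; tauto

lemma not_crosses_of_mem_Ico {l r : ℕ} {a b : ℕ × ℕ} (ha : a.1 ∈ Ico l r ∧ a.2 ∈ Ico l r)
    (hb : b.1 ∉ Ico l r ∧ b.2 ∉ Ico l r) : ¬ Crosses a b := by
  simp only [mem_Ico] at ha hb
  unfold Crosses
  omega

lemma Is2Arc.crosses_succ {a : ℕ × ℕ} (h : Is2Arc a) : Crosses a (a.1 + 1, a.2 + 1) := by
  unfold Is2Arc at h
  exact Or.inl ⟨Nat.lt_succ_self _, by omega, Nat.lt_succ_self _⟩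

lemma crosses_of_ne {k : ℕ} {f : Fin k → ℕ × ℕ}
    (h1 : ∀ i j : Fin k, i < j → (f i).1 < (f j).1) (h2 : ∀ i j : Fin k, i < j → (f i).2 < (f j).2)
    (h3 : ∀ i j : Fin k, (f i).1 < (f j).2) {i j : Fin k} (hij : i ≠ j) : Crosses (f i) (f j) := by
  rcases lt_or_gt_of_ne hij with h | h
  · exact Or.inl ⟨h1 i j h, h3 j i, h2 i j h⟩
  · exact Or.inr ⟨h1 j i h, h3 i j, h2 j i h⟩

lemma HasKCrossing.le_card {k : ℕ} {A : Finset (ℕ × ℕ)} (h : HasKCrossing k A) : k ≤ #A := by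
  obtain ⟨f, hf, h1, -, -⟩ := h
  have hmono : StrictMono fun i => (f i).1 := fun i j => h1 i j
  simpa using card_le_card_of_injOn (s := univ) f (fun i _ => hf i)
    (Function.Injective.of_comp hmono.injective).injOn

/-- The arcs of a crossing cross pairwise. -/
lemma hasKCrossing_union_iff {k : ℕ} {P S : Finset (ℕ × ℕ)}
    (hPS : ∀ a ∈ P, ∀ b ∈ S, ¬ Crosses a b) :
    HasKCrossing k (P ∪ S) ↔ HasKCrossing k P ∨ HasKCrossing k S := by
  constructor
  · rintro ⟨f, hf, h1, h2, h3⟩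
    by_cases hP : ∀ i, f i ∈ P
    · exact Or.inl ⟨f, hP, h1, h2, h3⟩
    obtain ⟨i, hi⟩ := not_forall.1 hP
    have hiS : f i ∈ S := (mem_union.1 (hf i)).resolve_left hi
    refine Or.inr ⟨f, fun j => ?_, h1, h2, h3⟩
    by_cases hji : j = i
    · exact hji ▸ hiS
    exact (mem_union.1 (hf j)).resolve_left fun hj =>
      hPS _ hj _ hiS (crosses_of_ne h1 h2 h3 hji)
  · rintro (⟨f, hf, h⟩ | ⟨f, hf, h⟩)
    · exact ⟨f, fun i => mem_union_left _ (hf i), h⟩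
    · exact ⟨f, fun i => mem_union_right _ (hf i), h⟩

lemma countC1_union {P S : Finset (ℕ × ℕ)} (hPS : Disjoint P S) :
    countC1 (P ∪ S) = countC1 P + countC1 S := by
  rw [countC1, filter_union, card_union_of_disjoint (disjoint_filter_filter hPS), countC1, countC1]

lemma countC2_eq_card_filter (A : Finset (ℕ × ℕ)) :
    countC2 A = #(A.filter fun a => Is2Arc a ∧ (a.1 + 1, a.2 + 1) ∈ A) := by
  refine card_nbij' Prod.fst (fun a => (a, (a.1 + 1, a.2 + 1))) ?_ ?_ ?_ fun _ _ => rfl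
  · rintro ⟨a, b⟩ h
    simp only [mem_coe, mem_filter, mem_product] at h ⊢
    simp only [Is2Arc, Crosses] at h ⊢
    obtain ⟨⟨ha, hb⟩, h1, h2, h3, h4⟩ := h
    refine ⟨ha, h1, ?_⟩
    convert hb using 1
    ext <;> simp only <;> omega
  · rintro a h
    simp only [mem_coe, mem_filter, mem_product] at h ⊢
    simp only [Is2Arc, Crosses] at h ⊢
    exact ⟨⟨h.1, h.2.2⟩, h.2.1, by omega, by omega, Or.inl (by omega)⟩
  · rintro ⟨a, b⟩ h
    simp only [mem_coe, mem_filter, mem_product] at h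
    simp only [Is2Arc, Crosses] at h
    simp only [Prod.mk.injEq, true_and]
    ext <;> simp only <;> omega

/-- A `2`-arc and its crossing partner lie on the same side. -/
lemma countC2_union {P S : Finset (ℕ × ℕ)} (hPS : Disjoint P S)
    (hcross : ∀ a ∈ P, ∀ b ∈ S, ¬ Crosses a b) :
    countC2 (P ∪ S) = countC2 P + countC2 S := by
  have hsplit : (P ∪ S).filter (fun a => Is2Arc a ∧ (a.1 + 1, a.2 + 1) ∈ P ∪ S) =
      P.filter (fun a => Is2Arc a ∧ (a.1 + 1, a.2 + 1) ∈ P) ∪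
        S.filter (fun a => Is2Arc a ∧ (a.1 + 1, a.2 + 1) ∈ S) := by
    ext a
    simp only [mem_union, mem_filter]
    constructor
    · rintro ⟨ha | ha, h2, hb | hb⟩
      · exact Or.inl ⟨ha, h2, hb⟩
      · exact absurd h2.crosses_succ (hcross a ha _ hb)
      · exact absurd (crosses_comm.1 h2.crosses_succ) (hcross _ hb a ha)
      · exact Or.inr ⟨ha, h2, hb⟩
    · rintro (⟨ha, h2, hb⟩ | ⟨ha, h2, hb⟩)
      · exact ⟨Or.inl ha, h2, Or.inl hb⟩
      · exact ⟨Or.inr ha, h2, Or.inr hb⟩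
  rw [countC2_eq_card_filter, hsplit, card_union_of_disjoint (disjoint_filter_filter hPS),
    ← countC2_eq_card_filter, ← countC2_eq_card_filter]

end Arcs

section Relabel

variable {f : ℕ → ℕ}

lemma hasKCrossing_image_iff (hf : StrictMono f) {k : ℕ} {R : Finset (ℕ × ℕ)} :
    HasKCrossing k (R.image (Prod.map f f)) ↔ HasKCrossing k R := by
  constructor
  · rintro ⟨g, hg, h1, h2, h3⟩
    choose c hc hcg using fun i => mem_image.1 (hg i)
    obtain rfl : g = Prod.map f f ∘ c := funext fun i => (hcg i).symm
    simp only [Function.comp_apply, Prod.map_fst, Prod.map_snd, hf.lt_iff_lt] at h1 h2 h3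
    exact ⟨c, hc, h1, h2, h3⟩
  · rintro ⟨g, hg, h1, h2, h3⟩
    exact ⟨Prod.map f f ∘ g, fun i => mem_image_of_mem _ (hg i), fun i j h => hf (h1 i j h),
      fun i j h => hf (h2 i j h), fun i j => hf (h3 i j)⟩

lemma isPerfectMatching_image_iff (hf : StrictMono f) {V : Finset ℕ} {R : Finset (ℕ × ℕ)} :
    IsPerfectMatching (V.image f) (R.image (Prod.map f f)) ↔ IsPerfectMatching V R := by
  have hinj := hf.injective
  simp only [IsPerfectMatching, VertexDisjoint, forall_mem_image, exists_mem_image,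
    Prod.map_fst, Prod.map_snd, hf.lt_iff_lt, hinj.mem_finset_image, hinj.eq_iff, ne_eq,
    (hinj.prodMap hinj).eq_iff]

end Relabel

section Gap

/-- Relabelling that opens a gap of `w` new vertices `j, …, j + w - 1`. -/
def gapShift (j w v : ℕ) : ℕ := if j ≤ v then v + w else v

/-- An arc that is stretched when a gap is opened at `j`. -/
def Straddles (j : ℕ) (a : ℕ × ℕ) : Prop := a.1 < j ∧ j ≤ a.2

/-- Fill a gap of width `w` opened in `R` at `j` with the block `P`. -/
def insertBlock (P : Finset (ℕ × ℕ)) (j w : ℕ) (R : Finset (ℕ × ℕ)) : Finset (ℕ × ℕ) :=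
  P ∪ R.image (Prod.map (gapShift j w) (gapShift j w))

lemma gapShift_strictMono (j w : ℕ) : StrictMono (gapShift j w) := by
  intro u v h; unfold gapShift; split_ifs <;> omega

noncomputable def contract (j w : ℕ) (A : Finset (ℕ × ℕ)) : Finset (ℕ × ℕ) :=
  A.preimage (Prod.map (gapShift j w) (gapShift j w))
    ((gapShift_strictMono j w).injective.prodMap (gapShift_strictMono j w).injective).injOn

variable {P R : Finset (ℕ × ℕ)} {j w : ℕ}

lemma gapShift_notMem_Ico (v : ℕ) : gapShift j w v ∉ Ico j (j + w) := by
  unfold gapShift; split_ifs <;> simp only [mem_Ico] <;> omega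

lemma exists_gapShift_eq {v : ℕ} (hv : v ∉ Ico j (j + w)) : ∃ u, gapShift j w u = v := by
  rw [mem_Ico] at hv
  by_cases h : v < j
  · exact ⟨v, if_neg (by omega)⟩
  · exact ⟨v - w, by rw [gapShift, if_pos (by omega)]; omega⟩

lemma gapShift_eq_add_iff {d u v : ℕ} (hd : d ≤ w) :
    gapShift j w u = gapShift j w v + d ↔ u = v + d ∧ ¬ (v < j ∧ j ≤ v + d) := by
  unfold gapShift; split_ifs <;> omega

lemma Icc_eq_Ico_union_image_gapShift {n : ℕ} (hj : 1 ≤ j) (hjn : j + w ≤ n + 1) :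
    Icc 1 n = Ico j (j + w) ∪ (Icc 1 (n - w)).image (gapShift j w) := by
  ext v
  simp only [mem_Icc, mem_union, mem_Ico, mem_image, gapShift]
  constructor
  · intro hv
    by_cases h : j ≤ v ∧ v < j + w
    · exact Or.inl h
    · right
      by_cases hvj : v < j
      · exact ⟨v, by omega, by rw [if_neg (by omega)]⟩
      · exact ⟨v - w, by omega, by rw [if_pos (by omega)]; omega⟩
  · rintro (h | ⟨u, hu, rfl⟩)
    · omega
    · split_ifs <;> omega

lemma notMem_Ico_of_mem_image_gapShift {a : ℕ × ℕ}
    (ha : a ∈ R.image (Prod.map (gapShift j w) (gapShift j w))) :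
    a.1 ∉ Ico j (j + w) ∧ a.2 ∉ Ico j (j + w) := by
  obtain ⟨b, -, rfl⟩ := mem_image.1 ha
  exact ⟨gapShift_notMem_Ico b.1, gapShift_notMem_Ico b.2⟩

lemma countC1_image_gapShift (hw : 1 ≤ w) :
    countC1 (R.image (Prod.map (gapShift j w) (gapShift j w))) =
      #(R.filter fun a => Is1Arc a ∧ ¬ Straddles j a) := by
  have hinj := (gapShift_strictMono j w).injective
  rw [countC1, filter_image, card_image_of_injective _ (hinj.prodMap hinj)]
  refine congrArg card (filter_congr fun a _ => ?_)
  simp only [Is1Arc, Prod.map_fst, Prod.map_snd, gapShift_eq_add_iff hw, Straddles]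
  omega

lemma countC2_image_gapShift (hw : 2 ≤ w) :
    countC2 (R.image (Prod.map (gapShift j w) (gapShift j w))) =
      #(R.filter fun a => Is2Arc a ∧ (a.1 + 1, a.2 + 1) ∈ R ∧ ¬ Straddles j (a.1, a.2 + 1)) := by
  have hinj := (gapShift_strictMono j w).injective
  rw [countC2_eq_card_filter, filter_image, card_image_of_injective _ (hinj.prodMap hinj)]
  refine congrArg card (filter_congr fun a _ => ?_)
  simp only [Is2Arc, Straddles, Prod.map_fst, Prod.map_snd, mem_image, Prod.ext_iff,
    gapShift_eq_add_iff hw, gapShift_eq_add_iff (show 1 ≤ w by omega)]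
  constructor
  · rintro ⟨h2, c, hc, h1, h3⟩
    obtain rfl : c = (a.1 + 1, a.2 + 1) := Prod.ext h1.1 h3.1
    exact ⟨h2.1, hc, by omega⟩
  · rintro ⟨h2, hR, hns⟩
    exact ⟨⟨h2, by omega⟩, _, hR, ⟨rfl, by omega⟩, ⟨rfl, by omega⟩⟩

/-- Only the arc `(j-1, j)`, which becomes `(j-1, j+w)`, can stack on an arc of the block. -/
lemma forall_inner_gapShift_notMem_iff (hP : IsPerfectMatching (Ico j (j + w)) P) (hj : 1 ≤ j)
    (hR : ∀ a ∈ R, a.1 < a.2) :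
    (∀ b ∈ R, (gapShift j w b.1 + 1, gapShift j w b.2 - 1) ∉ P) ↔
      ((j, j + w - 1) ∈ P → (j - 1, j) ∉ R) := by
  constructor
  · intro h hspan hR'
    refine h _ hR' ?_
    convert hspan using 2 <;> simp only [gapShift] <;> split_ifs <;> omega
  · intro h b hb hbP
    obtain ⟨hlt, h1, h2⟩ := hP.1 _ hbP
    have hb' := hR b hb
    simp only [mem_Ico, gapShift] at h1 h2 hlt
    obtain rfl : b = (j - 1, j) := by
      ext <;> simp only <;> split_ifs at h1 h2 hlt <;> omega
    refine h ?_ hb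
    convert hbP using 2 <;> simp only [gapShift] <;> split_ifs <;> omega

/-- `R` becomes stack-free once a gap is opened at `j`. -/
def GapStackFree (j : ℕ) (R : Finset (ℕ × ℕ)) : Prop :=
  ∀ a ∈ R, (a.1 + 1, a.2 - 1) ∈ R → a.1 + 1 = j ∨ a.2 = j

lemma forall_inner_gapShift_notMem_image_iff (hw : 1 ≤ w) (hR : ∀ a ∈ R, a.1 < a.2) :
    (∀ b ∈ R, (gapShift j w b.1 + 1, gapShift j w b.2 - 1) ∉
      R.image (Prod.map (gapShift j w) (gapShift j w))) ↔ GapStackFree j R := by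
  constructor
  · intro h b hb hinner
    by_contra hne
    refine h b hb (mem_image.2 ⟨_, hinner, ?_⟩)
    have := hR b hb
    ext <;> simp only [Prod.map_fst, Prod.map_snd, gapShift] <;> split_ifs <;> omega
  · intro h b hb hmem
    obtain ⟨c, hc, hcb⟩ := mem_image.1 hmem
    have := hR b hb
    simp only [Prod.ext_iff, Prod.map_fst, Prod.map_snd, gapShift] at hcb
    obtain rfl : c = (b.1 + 1, b.2 - 1) := by
      ext <;> simp only <;> split_ifs at hcb <;> omega
    have hne : ¬ (b.1 + 1 = j ∨ b.2 = j) := by split_ifs at hcb <;> omega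
    exact hne (h b hb hc)

end Gap

section InsertBlock

variable {P R : Finset (ℕ × ℕ)} {j w : ℕ}

lemma not_crosses_insertBlock (hP : IsPerfectMatching (Ico j (j + w)) P) :
    ∀ a ∈ P, ∀ b ∈ R.image (Prod.map (gapShift j w) (gapShift j w)), ¬ Crosses a b :=
  fun a ha _ hb => not_crosses_of_mem_Ico (hP.1 a ha).2 (notMem_Ico_of_mem_image_gapShift hb)

lemma disjoint_insertBlock (hP : IsPerfectMatching (Ico j (j + w)) P) :
    Disjoint P (R.image (Prod.map (gapShift j w) (gapShift j w))) :=
  disjoint_left.2 fun a ha haR => (notMem_Ico_of_mem_image_gapShift haR).1 (hP.1 a ha).2.1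

lemma card_insertBlock (hP : IsPerfectMatching (Ico j (j + w)) P) :
    #(insertBlock P j w R) = #P + #R := by
  rw [insertBlock, card_union_of_disjoint (disjoint_insertBlock hP),
    card_image_of_injective _ ((gapShift_strictMono j w).injective.prodMap
      (gapShift_strictMono j w).injective)]

lemma countC1_insertBlock (hP : IsPerfectMatching (Ico j (j + w)) P) (hw : 1 ≤ w) :
    countC1 (insertBlock P j w R) =
      countC1 P + #(R.filter fun a => Is1Arc a ∧ ¬ Straddles j a) := by
  rw [insertBlock, countC1_union (disjoint_insertBlock hP), countC1_image_gapShift hw]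

lemma countC2_insertBlock (hP : IsPerfectMatching (Ico j (j + w)) P) (hw : 2 ≤ w) :
    countC2 (insertBlock P j w R) = countC2 P +
      #(R.filter fun a => Is2Arc a ∧ (a.1 + 1, a.2 + 1) ∈ R ∧ ¬ Straddles j (a.1, a.2 + 1)) := by
  rw [insertBlock, countC2_union (disjoint_insertBlock hP) (not_crosses_insertBlock hP),
    countC2_image_gapShift hw]

lemma hasKCrossing_insertBlock_iff (hP : IsPerfectMatching (Ico j (j + w)) P) {k : ℕ} :
    HasKCrossing k (insertBlock P j w R) ↔ HasKCrossing k P ∨ HasKCrossing k R := by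
  rw [insertBlock, hasKCrossing_union_iff (not_crosses_insertBlock hP),
    hasKCrossing_image_iff (gapShift_strictMono j w)]

lemma isPerfectMatching_insertBlock_iff (hP : IsPerfectMatching (Ico j (j + w)) P) (hw : 0 < w)
    {n : ℕ} : IsPerfectMatching (Icc 1 n) (insertBlock P j w R) ↔
      1 ≤ j ∧ j + w ≤ n + 1 ∧ IsPerfectMatching (Icc 1 (n - w)) R := by
  have hsplit (hj : 1 ≤ j) (hjn : j + w ≤ n + 1) :
      IsPerfectMatching (Icc 1 n) (insertBlock P j w R) ↔
        IsPerfectMatching (Icc 1 (n - w)) R := by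
    have hgap : Disjoint (Ico j (j + w)) ((Icc 1 (n - w)).image (gapShift j w)) :=
      disjoint_right.2 fun v hv => by
        obtain ⟨u, -, rfl⟩ := mem_image.1 hv
        exact gapShift_notMem_Ico u
    rw [Icc_eq_Ico_union_image_gapShift hj hjn, insertBlock,
      isPerfectMatching_union_iff hgap (fun a ha => (hP.1 a ha).2)
        (fun a ha => notMem_Ico_of_mem_image_gapShift ha),
      isPerfectMatching_image_iff (gapShift_strictMono j w), and_iff_right hP]
  constructor
  · intro h
    have hcov : ∀ v ∈ Ico j (j + w), 1 ≤ v ∧ v ≤ n := by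
      intro v hv
      obtain ⟨a, ha, hva⟩ := hP.2.2 v hv
      obtain ⟨-, h1, h2⟩ := h.1 a (mem_union_left _ ha)
      rw [mem_Icc] at h1 h2
      omega
    have h₁ := hcov j (by simp [hw])
    have h₂ := hcov (j + w - 1) (by simp only [mem_Ico]; omega)
    exact ⟨h₁.1, by omega, (hsplit h₁.1 (by omega)).1 h⟩
  · rintro ⟨hj, hjn, hR⟩
    exact (hsplit hj hjn).2 hR

lemma stackFree_insertBlock_iff (hP : IsPerfectMatching (Ico j (j + w)) P) (hw : 1 ≤ w)
    (hj : 1 ≤ j) (hR : ∀ a ∈ R, a.1 < a.2) :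
    StackFree (insertBlock P j w R) ↔
      StackFree P ∧ GapStackFree j R ∧ ((j, j + w - 1) ∈ P → (j - 1, j) ∉ R) := by
  have hblock : ∀ a ∈ P, (a.1 + 1, a.2 - 1) ∉ R.image (Prod.map (gapShift j w) (gapShift j w)) := by
    intro a ha h
    obtain ⟨hlt, h1, h2⟩ := hP.1 a ha
    have := (notMem_Ico_of_mem_image_gapShift h).1
    simp only [mem_Ico] at h1 h2 this
    omega
  simp only [StackFree, insertBlock, mem_union, or_imp, not_or, forall_and, forall_mem_image,
    Prod.map_fst, Prod.map_snd, ← forall_inner_gapShift_notMem_iff hP hj hR,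
    ← forall_inner_gapShift_notMem_image_iff hw hR]
  tauto

lemma contract_insertBlock (hP : IsPerfectMatching (Ico j (j + w)) P) :
    contract j w (insertBlock P j w R) = R := by
  have hinj := (gapShift_strictMono j w).injective
  ext a
  rw [contract, mem_preimage, insertBlock, mem_union, (hinj.prodMap hinj).mem_finset_image,
    or_iff_right fun h => gapShift_notMem_Ico a.1 (hP.1 _ h).2.1]

lemma insertBlock_contract {A : Finset (ℕ × ℕ)} (hP : IsPerfectMatching (Ico j (j + w)) P)
    (hPA : P ⊆ A) (hA : VertexDisjoint A) : insertBlock P j w (contract j w A) = A := by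
  ext a
  rw [insertBlock, contract, image_preimage, mem_union, mem_filter]
  constructor
  · rintro (h | ⟨h, -⟩)
    exacts [hPA h, h]
  · intro ha
    by_cases haP : a ∈ P
    · exact Or.inl haP
    -- every vertex of the gap is taken by an arc of `P`
    have avoid : ∀ x, x = a.1 ∨ x = a.2 → x ∉ Ico j (j + w) := by
      intro x hx hxI
      obtain ⟨b, hb, hxb⟩ := hP.2.2 x hxI
      have := hA a ha b (hPA hb) fun e => haP (e ▸ hb)
      omega
    obtain ⟨u₁, hu₁⟩ := exists_gapShift_eq (avoid _ (Or.inl rfl))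
    obtain ⟨u₂, hu₂⟩ := exists_gapShift_eq (avoid _ (Or.inr rfl))
    exact Or.inr ⟨ha, (u₁, u₂), Prod.ext hu₁ hu₂⟩

end InsertBlock

section Shapes

noncomputable def shapes (k s u₁ u₂ : ℕ) : Finset (Finset (ℕ × ℕ)) :=
  (Icc 1 (2 * s) ×ˢ Icc 1 (2 * s)).powerset.filter
    fun A => IsShape k (2 * s) A ∧ #A = s ∧ countC1 A = u₁ ∧ countC2 A = u₂

variable {k s u₁ u₂ : ℕ}

lemma mem_shapes {A : Finset (ℕ × ℕ)} :
    A ∈ shapes k s u₁ u₂ ↔ IsShape k (2 * s) A ∧ #A = s ∧ countC1 A = u₁ ∧ countC2 A = u₂ := by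
  rw [shapes, mem_filter, mem_powerset, and_iff_right_iff_imp]
  intro h a ha
  obtain ⟨h1, h2, h3⟩ := h.1.1.1.1 a ha
  simp only [mem_product, mem_Icc]
  omega

lemma vertexDisjoint_of_mem_shapes {A : Finset (ℕ × ℕ)} (hA : A ∈ shapes k s u₁ u₂) :
    VertexDisjoint A :=
  (mem_shapes.1 hA).1.1.1.2

lemma ik3_eq_card_shapes (k s u₁ u₂ : ℕ) : ik3 k s u₁ u₂ = #(shapes k s u₁ u₂) := by
  rw [ik3, ← Nat.card_eq_finsetCard]
  exact Nat.card_congr (Equiv.subtypeEquivRight fun A => mem_shapes.symm)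

lemma ik3_zero_succ (k u₁ u₂ : ℕ) : ik3 k 0 (u₁ + 1) u₂ = 0 := by
  rw [ik3_eq_card_shapes, card_eq_zero, eq_empty_iff_forall_notMem]
  intro A hA
  obtain ⟨-, hcard, h1, -⟩ := mem_shapes.1 hA
  rw [card_eq_zero.1 hcard] at h1
  simp [countC1] at h1

lemma insertBlock_mem_shapes_iff {j w : ℕ} {P R : Finset (ℕ × ℕ)}
    (hP : IsPerfectMatching (Ico j (j + w)) P) (hPk : ¬ HasKCrossing k P) (hw : 2 ≤ w) :
    insertBlock P j w R ∈ shapes k s u₁ u₂ ↔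
      (1 ≤ j ∧ j + w ≤ 2 * s + 1 ∧ IsPerfectMatching (Icc 1 (2 * s - w)) R) ∧
        ¬ HasKCrossing k R ∧
        (StackFree P ∧ GapStackFree j R ∧ ((j, j + w - 1) ∈ P → (j - 1, j) ∉ R)) ∧
        #P + #R = s ∧
        countC1 P + #(R.filter fun a => Is1Arc a ∧ ¬ Straddles j a) = u₁ ∧
        countC2 P + #(R.filter fun a =>
          Is2Arc a ∧ (a.1 + 1, a.2 + 1) ∈ R ∧ ¬ Straddles j (a.1, a.2 + 1)) = u₂ := by
  rw [mem_shapes, isShape_iff, isPerfectMatching_insertBlock_iff hP (by omega),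
    hasKCrossing_insertBlock_iff hP, card_insertBlock hP, countC1_insertBlock hP (by omega),
    countC2_insertBlock hP hw, or_iff_right hPk]
  constructor
  · rintro ⟨⟨hR, hk, hs⟩, hrest⟩
    exact ⟨hR, hk, (stackFree_insertBlock_iff hP (by omega) hR.1
      fun a ha => (hR.2.2.1 a ha).1).1 hs, hrest⟩
  · rintro ⟨hR, hk, hs, hrest⟩
    exact ⟨⟨hR, hk, (stackFree_insertBlock_iff hP (by omega) hR.1
      fun a ha => (hR.2.2.1 a ha).1).2 hs⟩, hrest⟩

end Shapes

section Blocks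

def oneArc (j : ℕ) : Finset (ℕ × ℕ) := {(j, j + 1)}

def crossPair (j : ℕ) : Finset (ℕ × ℕ) := {(j, j + 2), (j + 1, j + 3)}

def coveredPair (j : ℕ) : Finset (ℕ × ℕ) := insert (j, j + 5) (crossPair (j + 1))

variable {j k : ℕ}

lemma isPerfectMatching_oneArc : IsPerfectMatching (Ico j (j + 2)) (oneArc j) := by
  simp only [IsPerfectMatching, VertexDisjoint, oneArc, mem_singleton, mem_Ico,
    forall_eq, exists_eq_left]
  exact ⟨by omega, by simp, fun v hv => by omega⟩

lemma isPerfectMatching_crossPair : IsPerfectMatching (Ico j (j + 4)) (crossPair j) := by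
  simp only [IsPerfectMatching, VertexDisjoint, crossPair, mem_insert, mem_singleton, mem_Ico,
    forall_eq_or_imp, forall_eq, exists_eq_or_imp, exists_eq_left]
  exact ⟨by omega, by simp, fun v hv => by omega⟩

lemma isPerfectMatching_coveredPair : IsPerfectMatching (Ico j (j + 6)) (coveredPair j) := by
  simp only [IsPerfectMatching, VertexDisjoint, coveredPair, crossPair, mem_insert,
    mem_singleton, mem_Ico, forall_eq_or_imp, forall_eq, exists_eq_or_imp, exists_eq_left]
  exact ⟨by omega, by simp [add_assoc], fun v hv => by omega⟩

lemma card_oneArc : #(oneArc j) = 1 := rfl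

lemma card_crossPair : #(crossPair j) = 2 := by simp [crossPair]

lemma card_coveredPair : #(coveredPair j) = 3 := by
  rw [coveredPair, card_insert_of_notMem (by simp [crossPair]), card_crossPair]

lemma not_hasKCrossing_oneArc (hk : 2 ≤ k) : ¬ HasKCrossing k (oneArc j) := fun h => by
  have := h.le_card; rw [card_oneArc] at this; omega

lemma not_hasKCrossing_crossPair (hk : 3 ≤ k) : ¬ HasKCrossing k (crossPair j) := fun h => by
  have := h.le_card; rw [card_crossPair] at this; omega

lemma not_hasKCrossing_coveredPair (hk : 3 ≤ k) : ¬ HasKCrossing k (coveredPair j) := by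
  rw [coveredPair, insert_eq, hasKCrossing_union_iff, not_or]
  · refine ⟨fun h => ?_, not_hasKCrossing_crossPair hk⟩
    have := h.le_card
    rw [card_singleton] at this
    omega
  · simp only [mem_singleton, crossPair, mem_insert, forall_eq, forall_eq_or_imp, Crosses]
    omega

lemma stackFree_oneArc : StackFree (oneArc j) := by simp [StackFree, oneArc]

lemma stackFree_crossPair : StackFree (crossPair j) := by
  simp [StackFree, crossPair, add_assoc]

lemma stackFree_coveredPair : StackFree (coveredPair j) := by
  simp [StackFree, coveredPair, crossPair, add_assoc]

lemma countC1_oneArc : countC1 (oneArc j) = 1 := by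
  simp [countC1, oneArc, Is1Arc, filter_singleton]

lemma countC1_crossPair : countC1 (crossPair j) = 0 := by
  simp [countC1, crossPair, Is1Arc, filter_insert]

lemma countC1_coveredPair : countC1 (coveredPair j) = 0 := by
  simp [countC1, coveredPair, crossPair, Is1Arc, filter_insert]

lemma countC2_oneArc : countC2 (oneArc j) = 0 := by
  simp [countC2_eq_card_filter, oneArc, Is2Arc]

lemma countC2_crossPair : countC2 (crossPair j) = 1 := by
  simp [countC2_eq_card_filter, crossPair, Is2Arc, filter_insert]

lemma countC2_coveredPair : countC2 (coveredPair j) = 1 := by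
  simp [countC2_eq_card_filter, coveredPair, crossPair, Is2Arc, filter_insert, add_assoc]

end Blocks

section Counting

noncomputable def blockStarts (P : ℕ → Finset (ℕ × ℕ)) (A : Finset (ℕ × ℕ)) : Finset ℕ :=
  (A.image Prod.fst).filter fun j => P j ⊆ A

lemma mem_blockStarts_iff {P : ℕ → Finset (ℕ × ℕ)} {A : Finset (ℕ × ℕ)} {j w : ℕ}
    (hP : IsPerfectMatching (Ico j (j + w)) (P j)) (hw : 0 < w) :
    j ∈ blockStarts P A ↔ P j ⊆ A := by
  rw [blockStarts, mem_filter, and_iff_right_iff_imp]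
  intro hPA
  obtain ⟨a, ha, hja⟩ := hP.2.2 j (by simp [hw])
  obtain ⟨hlt, h1, -⟩ := hP.1 a ha
  rw [mem_Ico] at h1
  exact mem_image.2 ⟨a, hPA ha, by omega⟩

lemma card_blockStarts_oneArc (A : Finset (ℕ × ℕ)) : #(blockStarts oneArc A) = countC1 A := by
  rw [countC1, ← card_image_of_injOn (f := Prod.fst)]
  · congr 1
    ext j
    simp only [blockStarts, oneArc, singleton_subset_iff, mem_filter, mem_image]
    constructor
    · rintro ⟨-, h⟩
      exact ⟨_, ⟨h, rfl⟩, rfl⟩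
    · rintro ⟨a, ⟨ha, h1⟩, rfl⟩
      exact ⟨⟨a, ha, rfl⟩, by rw [← h1]; exact ha⟩
  · intro a ha b hb hab
    simp only [mem_coe, mem_filter, Is1Arc] at ha hb
    exact Prod.ext hab (by rw [ha.2, hb.2, hab])

lemma card_blockStarts_crossPair (A : Finset (ℕ × ℕ)) :
    #(blockStarts crossPair A) = countC2 A := by
  rw [countC2_eq_card_filter, ← card_image_of_injOn (f := Prod.fst)]
  · congr 1
    ext j
    simp only [blockStarts, crossPair, insert_subset_iff, singleton_subset_iff, mem_filter,
      mem_image]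
    constructor
    · rintro ⟨-, h, h'⟩
      exact ⟨_, ⟨h, rfl, h'⟩, rfl⟩
    · rintro ⟨a, ⟨ha, h2, h'⟩, rfl⟩
      rw [Is2Arc] at h2
      exact ⟨⟨a, ha, rfl⟩, by rwa [← h2], by rwa [h2] at h'⟩
  · intro a ha b hb hab
    simp only [mem_coe, mem_filter] at ha hb
    rw [Is2Arc] at ha hb
    exact Prod.ext hab (by rw [ha.2.1, hb.2.1, hab])

/-- A crossing pair at `j` covered by the arc `(j-1, j+4)` is the block `coveredPair (j - 1)`. -/
lemma card_blockStarts_crossPair_eq {A : Finset (ℕ × ℕ)} (hA : ∀ a ∈ A, 1 ≤ a.1) :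
    #(blockStarts crossPair A) =
      #((blockStarts crossPair A).filter fun j => (j - 1, j + 4) ∉ A) +
        #(blockStarts coveredPair A) := by
  rw [← card_filter_add_card_filter_not (s := blockStarts crossPair A)
    (fun j => (j - 1, j + 4) ∉ A), add_right_inj,
    ← card_image_of_injective (blockStarts coveredPair A) (add_left_injective 1)]
  congr 1
  ext i
  simp only [not_not, mem_filter, mem_image, blockStarts, coveredPair, insert_subset_iff,
    crossPair, singleton_subset_iff]
  constructor
  · rintro ⟨⟨-, h2, h3⟩, h5⟩
    have hi : 1 ≤ i := hA _ h2
    refine ⟨i - 1, ⟨⟨_, h5, rfl⟩, ?_, ?_, ?_⟩, by omega⟩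
    · convert h5 using 2; omega
    · convert h2 using 2 <;> omega
    · convert h3 using 2 <;> omega
  · rintro ⟨j, ⟨-, h5, h2, h3⟩, rfl⟩
    exact ⟨⟨⟨_, h2, rfl⟩, h2, h3⟩, by simpa using h5⟩

/-- Exchanging the block `P j` for `Q j` is a bijection between marked occurrences. -/
lemma card_sigma_blockStarts_eq {S T : Finset (Finset (ℕ × ℕ))} {P Q : ℕ → Finset (ℕ × ℕ)}
    {w v : ℕ} {c : Finset (ℕ × ℕ) → ℕ → Prop} [∀ A, DecidablePred (c A)]
    (hP : ∀ j, IsPerfectMatching (Ico j (j + w)) (P j))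
    (hQ : ∀ j, IsPerfectMatching (Ico j (j + v)) (Q j)) (hw : 0 < w) (hv : 0 < v)
    (hS : ∀ A ∈ S, VertexDisjoint A) (hT : ∀ B ∈ T, VertexDisjoint B)
    (h : ∀ j R, insertBlock (P j) j w R ∈ S ∧ c (insertBlock (P j) j w R) j ↔
      insertBlock (Q j) j v R ∈ T) :
    #(S.sigma fun A => (blockStarts P A).filter (c A)) = #(T.sigma (blockStarts Q)) := by
  refine card_nbij' (fun x => ⟨insertBlock (Q x.2) x.2 v (contract x.2 w x.1), x.2⟩)
    (fun y => ⟨insertBlock (P y.2) y.2 w (contract y.2 v y.1), y.2⟩) ?_ ?_ ?_ ?_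
  · rintro ⟨A, j⟩ hx
    simp only [mem_coe, mem_sigma, mem_filter, mem_blockStarts_iff (hP j) hw] at hx ⊢
    obtain ⟨hA, hPA, hc⟩ := hx
    rw [mem_blockStarts_iff (hQ j) hv, ← h, insertBlock_contract (hP j) hPA (hS A hA)]
    exact ⟨⟨hA, hc⟩, subset_union_left⟩
  · rintro ⟨B, j⟩ hy
    simp only [mem_coe, mem_sigma, mem_blockStarts_iff (hQ j) hv] at hy ⊢
    obtain ⟨hB, hQB⟩ := hy
    rw [← insertBlock_contract (hQ j) hQB (hT B hB), ← h] at hB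
    rw [mem_filter, mem_blockStarts_iff (hP j) hw]
    exact ⟨hB.1, subset_union_left, hB.2⟩
  · rintro ⟨A, j⟩ hx
    simp only [mem_coe, mem_sigma, mem_filter, mem_blockStarts_iff (hP j) hw] at hx
    simp only [contract_insertBlock (hQ j), insertBlock_contract (hP j) hx.2.1 (hS A hx.1)]
  · rintro ⟨B, j⟩ hy
    simp only [mem_coe, mem_sigma, mem_blockStarts_iff (hQ j) hv] at hy
    simp only [contract_insertBlock (hP j), insertBlock_contract (hQ j) hy.2 (hT B hy.1)]

lemma card_sigma_blockStarts_oneArc (k s u₁ u₂ : ℕ) :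
    #((shapes k s u₁ u₂).sigma (blockStarts oneArc)) = ik3 k s u₁ u₂ * u₁ := by
  rw [card_sigma, sum_congr rfl fun A hA =>
      (card_blockStarts_oneArc A).trans (mem_shapes.1 hA).2.2.1,
    sum_const, smul_eq_mul, ik3_eq_card_shapes]

lemma card_sigma_blockStarts_crossPair (k s u₁ u₂ : ℕ) :
    #((shapes k s u₁ u₂).sigma (blockStarts crossPair)) = ik3 k s u₁ u₂ * u₂ := by
  rw [card_sigma, sum_congr rfl fun A hA =>
      (card_blockStarts_crossPair A).trans (mem_shapes.1 hA).2.2.2,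
    sum_const, smul_eq_mul, ik3_eq_card_shapes]

end Counting

section Recurrence

variable {k s u₁ u₂ j : ℕ} {R : Finset (ℕ × ℕ)}

lemma mem_insertBlock_crossPair_iff (hj : 1 ≤ j) :
    (j - 1, j + 4) ∈ insertBlock (crossPair j) j 4 R ↔ (j - 1, j) ∈ R := by
  have hinj := (gapShift_strictMono j 4).injective
  have hshift : Prod.map (gapShift j 4) (gapShift j 4) (j - 1, j) = (j - 1, j + 4) := by
    simp only [Prod.map, gapShift]
    split_ifs <;> simp only [Prod.mk.injEq] <;> omega
  have hblock : (j - 1, j + 4) ∉ crossPair j := by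
    simp only [crossPair, mem_insert, mem_singleton, Prod.mk.injEq]; omega
  rw [insertBlock, mem_union, or_iff_right hblock, ← hshift, (hinj.prodMap hinj).mem_finset_image]

lemma insertBlock_crossPair_mem_shapes_iff (hk : 3 ≤ k) :
    insertBlock (crossPair j) j 4 R ∈ shapes k s u₁ (u₂ + 1) ∧
        (j - 1, j + 4) ∉ insertBlock (crossPair j) j 4 R ↔
      insertBlock (oneArc j) j 2 R ∈ shapes k (s - 1) (u₁ + 1) u₂ := by
  rw [insertBlock_mem_shapes_iff isPerfectMatching_crossPair (not_hasKCrossing_crossPair hk)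
      (by norm_num),
    insertBlock_mem_shapes_iff isPerfectMatching_oneArc (not_hasKCrossing_oneArc (by omega))
      le_rfl]
  have hspan : (j, j + 4 - 1) ∉ crossPair j := by
    simp only [crossPair, mem_insert, mem_singleton, Prod.mk.injEq]; omega
  simp only [stackFree_crossPair, stackFree_oneArc, card_crossPair, card_oneArc, countC1_crossPair,
    countC1_oneArc, countC2_crossPair, countC2_oneArc, hspan, true_and, IsEmpty.forall_iff,
    and_true, show (j, j + 2 - 1) ∈ oneArc j from mem_singleton_self _, forall_const,
    show 2 * (s - 1) - 2 = 2 * s - 4 by omega]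
  constructor
  · rintro ⟨⟨⟨hj, hjs, hR⟩, hkR, hg, hc, h1, h2⟩, hmem⟩
    rw [mem_insertBlock_crossPair_iff hj] at hmem
    exact ⟨⟨hj, by omega, hR⟩, hkR, ⟨hg, hmem⟩, by omega, by omega, by omega⟩
  · rintro ⟨⟨hj, hjs, hR⟩, hkR, ⟨hg, hmem⟩, hc, h1, h2⟩
    rw [mem_insertBlock_crossPair_iff hj]
    exact ⟨⟨⟨hj, by omega, hR⟩, hkR, hg, by omega, by omega, by omega⟩, hmem⟩

lemma insertBlock_coveredPair_mem_shapes_iff (hk : 3 ≤ k) :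
    insertBlock (coveredPair j) j 6 R ∈ shapes k s u₁ (u₂ + 1) ∧ True ↔
      insertBlock (oneArc j) j 2 R ∈ shapes k (s - 2) (u₁ + 1) u₂ := by
  rw [and_true, insertBlock_mem_shapes_iff isPerfectMatching_coveredPair
      (not_hasKCrossing_coveredPair hk) (by norm_num),
    insertBlock_mem_shapes_iff isPerfectMatching_oneArc (not_hasKCrossing_oneArc (by omega))
      le_rfl]
  simp only [stackFree_coveredPair, stackFree_oneArc, card_coveredPair, card_oneArc,
    countC1_coveredPair, countC1_oneArc, countC2_coveredPair, countC2_oneArc, true_and,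
    show (j, j + 6 - 1) ∈ coveredPair j from mem_insert_self _ _,
    show (j, j + 2 - 1) ∈ oneArc j from mem_singleton_self _, forall_const,
    show 2 * (s - 2) - 2 = 2 * s - 6 by omega]
  constructor
  · rintro ⟨⟨hj, hjs, hR⟩, hkR, hg, hc, h1, h2⟩
    exact ⟨⟨hj, by omega, hR⟩, hkR, hg, by omega, by omega, by omega⟩
  · rintro ⟨⟨hj, hjs, hR⟩, hkR, hg, hc, h1, h2⟩
    exact ⟨⟨hj, by omega, hR⟩, hkR, hg, by omega, by omega, by omega⟩

theorem succ_mul_ik3 (hk : 3 ≤ k) (s u₁ u₂ : ℕ) :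
    (u₂ + 1) * ik3 k s u₁ (u₂ + 1) =
      (u₁ + 1) * ik3 k (s - 1) (u₁ + 1) u₂ + (u₁ + 1) * ik3 k (s - 2) (u₁ + 1) u₂ := by
  have hpos : ∀ A ∈ shapes k s u₁ (u₂ + 1), ∀ a ∈ A, 1 ≤ a.1 := fun A hA a ha =>
    ((mem_shapes.1 hA).1.1.1.1 a ha).1
  have hcross := card_sigma_blockStarts_eq (S := shapes k s u₁ (u₂ + 1))
    (T := shapes k (s - 1) (u₁ + 1) u₂) (c := fun A j => (j - 1, j + 4) ∉ A)
    (fun _ => isPerfectMatching_crossPair) (fun _ => isPerfectMatching_oneArc)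
    (by norm_num) (by norm_num) (fun _ => vertexDisjoint_of_mem_shapes)
    (fun _ => vertexDisjoint_of_mem_shapes) fun _ _ => insertBlock_crossPair_mem_shapes_iff hk
  have hcovered := card_sigma_blockStarts_eq (S := shapes k s u₁ (u₂ + 1))
    (T := shapes k (s - 2) (u₁ + 1) u₂) (c := fun _ _ => True)
    (fun _ => isPerfectMatching_coveredPair) (fun _ => isPerfectMatching_oneArc)
    (by norm_num) (by norm_num) (fun _ => vertexDisjoint_of_mem_shapes)
    (fun _ => vertexDisjoint_of_mem_shapes) fun _ _ => insertBlock_coveredPair_mem_shapes_iff hk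
  calc (u₂ + 1) * ik3 k s u₁ (u₂ + 1)
      = #((shapes k s u₁ (u₂ + 1)).sigma (blockStarts crossPair)) := by
        rw [card_sigma_blockStarts_crossPair, mul_comm]
    _ = #((shapes k s u₁ (u₂ + 1)).sigma fun A =>
            (blockStarts crossPair A).filter fun j => (j - 1, j + 4) ∉ A) +
          #((shapes k s u₁ (u₂ + 1)).sigma fun A =>
            (blockStarts coveredPair A).filter fun _ => True) := by
        simp only [card_sigma, filter_true, ← sum_add_distrib]
        exact sum_congr rfl fun A hA => card_blockStarts_crossPair_eq (hpos A hA)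
    _ = _ := by
        rw [hcross, hcovered, card_sigma_blockStarts_oneArc, card_sigma_blockStarts_oneArc]
        ring

end Recurrence

lemma coeff_X_add_X_sq_mul {σ R : Type*} [CommSemiring R] (i : σ) (F : MvPowerSeries σ R)
    (d : σ →₀ ℕ) :
    MvPowerSeries.coeff d ((MvPowerSeries.X i + MvPowerSeries.X i ^ 2) * F) =
      (if 1 ≤ d i then MvPowerSeries.coeff (d - Finsupp.single i 1) F else 0) +
        if 2 ≤ d i then MvPowerSeries.coeff (d - Finsupp.single i 2) F else 0 := by
  rw [MvPowerSeries.X_pow_eq, MvPowerSeries.X, add_mul, map_add,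
    MvPowerSeries.coeff_monomial_mul, MvPowerSeries.coeff_monomial_mul, one_mul, one_mul]
  simp only [Finsupp.single_le_iff]

/-- For `k > 2`, the trivariate generating function
`W_k(x,y,w) = ∑ i_k(s,u₁,u₂) x^s y^{u₁} w^{u₂}` satisfies the formal PDE
`∂W_k/∂w = (x + x²) · ∂W_k/∂y`. -/
theorem shapes_pde (k : ℕ) (hk : 2 < k) :
    mvDeriv (2 : Fin 3)
        ((fun d : Fin 3 →₀ ℕ => (ik3 k (d 0) (d 1) (d 2) : ℚ)) :
          MvPowerSeries (Fin 3) ℚ) =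
      (MvPowerSeries.X 0 + MvPowerSeries.X 0 ^ 2) *
        mvDeriv (1 : Fin 3)
          ((fun d : Fin 3 →₀ ℕ => (ik3 k (d 0) (d 1) (d 2) : ℚ)) :
            MvPowerSeries (Fin 3) ℚ) := by
  set W : MvPowerSeries (Fin 3) ℚ := fun d => (ik3 k (d 0) (d 1) (d 2) : ℚ)
  have hD (i : Fin 3) (e : Fin 3 →₀ ℕ) : MvPowerSeries.coeff e (mvDeriv i W) =
      ((e i : ℚ) + 1) * ik3 k (e 0 + Finsupp.single i 1 0) (e 1 + Finsupp.single i 1 1)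
        (e 2 + Finsupp.single i 1 2) := rfl
  have vanish (d : Fin 3 →₀ ℕ) (m : ℕ) (hm : d 0 < m) :
      (ik3 k (d 0 - m) (d 1 + 1) (d 2) : ℚ) = 0 := by
    rw [show d 0 - m = 0 by omega, ik3_zero_succ, Nat.cast_zero]
  ext d
  rw [coeff_X_add_X_sq_mul]
  simp only [Fin.isValue, hD, ne_eq, Fin.reduceEq, not_false_eq_true, Finsupp.single_eq_of_ne,
    add_zero, Finsupp.single_eq_same, Finsupp.coe_tsub, Pi.sub_apply, one_ne_zero, tsub_zero,
    zero_ne_one]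
  have key := congrArg (Nat.cast : ℕ → ℚ) (succ_mul_ik3 (by omega : 3 ≤ k) (d 0) (d 1) (d 2))
  push_cast at key
  rw [key]
  congr 1 <;> split_ifs with h
  · rfl
  · rw [vanish d 1 (by omega), mul_zero]
  · rfl
  · rw [vanish d 2 (by omega), mul_zero]

end ModularDiagrams
end

section
/- The generating function of modular noncrossing diagrams differs from the k > 2 formula evaluated at k = 2: as formal power series in z, ∑_{n≥0} Q_2(n) z^n ≠ ((1 − z² + z⁴)/q(z)) · F_2( z⁴(1 − z² − z⁴ + 2z⁶ − z⁸)/q(z)² ), where q(z) = 1 − z − z² + z³ + 2z⁴ + z⁶ − z⁸ + z¹⁰ − z¹². -/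
open scoped Classical

namespace ModularDiagrams

open PowerSeries

/-!
The two sides already differ at `z⁸`. There are four modular noncrossing diagrams on eight
vertices: the empty one and the stacks `(1,7)(2,6)`, `(2,8)(3,7)`, `(1,8)(2,7)`. On the other
side the argument `g` of `F₂` is divisible by `z⁴`, so modulo `z⁹` only `1 + g + 2g²` of
`F₂(g)` survives, and `q⁻¹` may be replaced by its truncation; the coefficient of `z⁸` is
then that of an explicit polynomial, namely `3`.
-/

section Truncation

variable {R : Type*} [CommRing R]

theorem _root_.PowerSeries.coeff_eq_of_mk_span_X_pow_eq {N n : ℕ} {f g : R⟦X⟧}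
    (h : Ideal.Quotient.mk (Ideal.span {X ^ N}) f = Ideal.Quotient.mk _ g) (hn : n < N) :
    coeff n f = coeff n g := by
  rw [Ideal.Quotient.eq, Ideal.mem_span_singleton] at h
  rw [← sub_eq_zero, ← map_sub]
  exact X_pow_dvd_iff.mp h n hn

theorem _root_.PowerSeries.coeff_pow_eq_zero_of_X_pow_dvd {d m n : ℕ} {g : R⟦X⟧}
    (hg : X ^ d ∣ g) (h : n < d * m) : coeff n (g ^ m) = 0 :=
  X_pow_dvd_iff.mp (by rw [pow_mul]; exact pow_dvd_pow_of_dvd hg m) n h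

end Truncation

theorem hasKCrossing_two_iff (A : Finset (ℕ × ℕ)) :
    HasKCrossing 2 A ↔ ∃ a ∈ A, ∃ b ∈ A, a.1 < b.1 ∧ b.1 < a.2 ∧ a.2 < b.2 := by
  constructor
  · rintro ⟨f, hfA, hfst, hsnd, hlt⟩
    exact ⟨f 0, hfA 0, f 1, hfA 1, hfst 0 1 Fin.zero_lt_one, hlt 1 0, hsnd 0 1 Fin.zero_lt_one⟩
  · rintro ⟨a, ha, b, hb, h₁, h₂, h₃⟩
    refine ⟨![a, b], fun i => ?_, fun i j hij => ?_, fun i j hij => ?_, fun i j => ?_⟩ <;>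
      fin_cases i <;> (try fin_cases j) <;> simp_all <;> omega

theorem isMatchingOn_iff (n : ℕ) (A : Finset (ℕ × ℕ)) :
    IsMatchingOn n A ↔ ∀ v ∈ Finset.Icc 1 n, ∃ a ∈ A, v = a.1 ∨ v = a.2 := by
  simp only [IsMatchingOn, Finset.mem_Icc, and_imp]

instance : DecidablePred (HasKCrossing 2) :=
  fun A => decidable_of_iff _ (hasKCrossing_two_iff A).symm

instance (n : ℕ) : DecidablePred (IsMatchingOn n) :=
  fun A => decidable_of_iff _ (isMatchingOn_iff n A).symm

instance (n : ℕ) : DecidablePred (IsDiagram n) :=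
  fun A => by unfold IsDiagram; infer_instance

instance (k n : ℕ) [DecidablePred (HasKCrossing k)] : DecidablePred (IsKNoncrossing k n) :=
  fun A => by unfold IsKNoncrossing; infer_instance

instance : DecidablePred IsModular :=
  fun A => by unfold IsModular; infer_instance

def arcs (n d : ℕ) : Finset (ℕ × ℕ) :=
  (Finset.Icc 1 n ×ˢ Finset.Icc 1 n).filter fun a => a.1 + d ≤ a.2

theorem IsDiagram.subset_arcs {n : ℕ} {A : Finset (ℕ × ℕ)} (h : IsDiagram n A) :
    A ⊆ arcs n 1 := fun a ha => by
  have := h.1 a ha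
  simp only [arcs, Finset.mem_filter, Finset.mem_product, Finset.mem_Icc]
  omega

theorem IsModular.subset_arcs {n : ℕ} {A : Finset (ℕ × ℕ)} (hd : IsDiagram n A)
    (hm : IsModular A) : A ⊆ arcs n 4 := fun a ha => by
  have := hd.1 a ha
  have := (hm a ha).1
  simp only [arcs, Finset.mem_filter, Finset.mem_product, Finset.mem_Icc]
  omega

theorem natCard_eq_card_filter_powerset {α : Type*} {P : Finset α → Prop} [DecidablePred P]
    (U : Finset α) (hU : ∀ A, P A → A ⊆ U) :
    Nat.card {A // P A} = (U.powerset.filter P).card := by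
  rw [← Nat.card_eq_finsetCard]
  exact Nat.card_congr <| Equiv.subtypeEquivRight fun A => by
    simp only [Finset.mem_filter, Finset.mem_powerset]
    exact ⟨fun h => ⟨hU A h, h⟩, And.right⟩

set_option maxRecDepth 10000 in
theorem Qk_two_eight : Qk 2 8 = 4 := by
  rw [Qk, natCard_eq_card_filter_powerset (arcs 8 4) fun A h => h.2.subset_arcs h.1.1]
  decide

theorem fk_two_zero : fk 2 0 = 1 := by
  rw [fk, natCard_eq_card_filter_powerset (arcs 0 1) fun A h => h.1.1.subset_arcs]
  decide

theorem fk_two_one : fk 2 1 = 1 := by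
  rw [fk, natCard_eq_card_filter_powerset (arcs 2 1) fun A h => h.1.1.subset_arcs]
  decide

theorem fk_two_two : fk 2 2 = 2 := by
  rw [fk, natCard_eq_card_filter_powerset (arcs 4 1) fun A h => h.1.1.subset_arcs]
  decide

theorem X_pow_dvd_FkComp_sub (k : ℕ) {d : ℕ} {g : ℚ⟦X⟧} (hg : X ^ d ∣ g) (M : ℕ) :
    X ^ (d * (M + 1)) ∣ FkComp k g - ∑ m ∈ Finset.range (M + 1), (fk k m : ℚ) • g ^ m := by
  refine X_pow_dvd_iff.mpr fun n hn => ?_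
  have hd : 0 < d := Nat.pos_of_ne_zero fun h => by simp [h] at hn
  have vanish : ∀ m, n < d * m → (fk k m : ℚ) * coeff n (g ^ m) = 0 := fun m h => by
    rw [coeff_pow_eq_zero_of_X_pow_dvd hg h, mul_zero]
  simp only [FkComp, map_sub, map_sum, coeff_mk, coeff_smul, smul_eq_mul, sub_eq_zero]
  calc ∑ m ∈ Finset.range (n + 1), (fk k m : ℚ) * coeff n (g ^ m)
      = ∑ m ∈ Finset.range (max (n + 1) (M + 1)), (fk k m : ℚ) * coeff n (g ^ m) :=
        Finset.sum_subset (Finset.range_subset_range.mpr (le_max_left _ _)) fun m _ hm =>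
          vanish m <| by have := not_lt.mp (Finset.mem_range.not.mp hm); nlinarith
    _ = ∑ m ∈ Finset.range (M + 1), (fk k m : ℚ) * coeff n (g ^ m) :=
        (Finset.sum_subset (Finset.range_subset_range.mpr (le_max_right _ _)) fun m _ hm =>
          vanish m <| by have := not_lt.mp (Finset.mem_range.not.mp hm); nlinarith).symm

theorem X_pow_twelve_dvd_FkComp_two_sub {g : ℚ⟦X⟧} (hg : X ^ 4 ∣ g) :
    X ^ 12 ∣ FkComp 2 g - (1 + g + 2 * g ^ 2) := by
  simpa [Finset.sum_range_succ, fk_two_zero, fk_two_one, fk_two_two, Nat.cast_smul_eq_nsmul]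
    using X_pow_dvd_FkComp_sub 2 hg 2

theorem coeff_eight_formula_of_mul_eq_one {s : ℚ⟦X⟧}
    (hs : (1 - X - X ^ 2 + X ^ 3 + 2 * X ^ 4 + X ^ 6 - X ^ 8 + X ^ 10 - X ^ 12) * s = 1) :
    coeff 8 ((1 - X ^ 2 + X ^ 4) * s *
      FkComp 2 (X ^ 4 * (1 - X ^ 2 - X ^ 4 + 2 * X ^ 6 - X ^ 8) * s ^ 2)) = 3 := by
  set π := Ideal.Quotient.mk (Ideal.span {(X : ℚ⟦X⟧) ^ 9})
  set q : ℚ⟦X⟧ := 1 - X - X ^ 2 + X ^ 3 + 2 * X ^ 4 + X ^ 6 - X ^ 8 + X ^ 10 - X ^ 12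
  set g := X ^ 4 * (1 - X ^ 2 - X ^ 4 + 2 * X ^ 6 - X ^ 8) * s ^ 2 with hg
  -- `p` is `q⁻¹` truncated below degree 9
  set p : ℚ⟦X⟧ :=
    1 + X + 2 * X ^ 2 + 2 * X ^ 3 + X ^ 4 - X ^ 5 - 7 * X ^ 6 - 14 * X ^ 7 - 23 * X ^ 8
  have hX9 : π (X ^ 9) = 0 :=
    Ideal.Quotient.eq_zero_iff_mem.mpr (Ideal.mem_span_singleton_self _)
  have hqp : π q * π p = 1 := by
    have : q * p = 1 + X ^ 9 * (29 - 5 * X - 53 * X ^ 2 - 53 * X ^ 3 - 12 * X ^ 4 - 17 * X ^ 5 +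
        11 * X ^ 6 + 15 * X ^ 7 - 13 * X ^ 8 - 16 * X ^ 9 + 14 * X ^ 10 + 23 * X ^ 11) := by
      ring
    rw [← map_mul, this, map_add, map_mul, hX9, zero_mul, add_zero, map_one]
  have hsp : π s = π p := by
    calc π s = π s * (π q * π p) := by rw [hqp, mul_one]
      _ = π (q * s) * π p := by rw [map_mul]; ring
      _ = π p := by rw [hs, map_one, one_mul]
  have hF : π (FkComp 2 g) = π (1 + g + 2 * g ^ 2) := by
    rw [Ideal.Quotient.eq, Ideal.mem_span_singleton]
    exact (pow_dvd_pow X (by norm_num)).trans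
      (X_pow_twelve_dvd_FkComp_two_sub (hg ▸ (dvd_mul_right (X ^ 4) _).mul_right _))
  have hπ : π ((1 - X ^ 2 + X ^ 4) * s * FkComp 2 g) =
      π ((1 - X ^ 2 + X ^ 4) * p * (1 + X ^ 4 * (1 - X ^ 2 - X ^ 4 + 2 * X ^ 6 - X ^ 8) * p ^ 2 +
        2 * (X ^ 4 * (1 - X ^ 2 - X ^ 4 + 2 * X ^ 6 - X ^ 8) * p ^ 2) ^ 2)) := by
    rw [map_mul, hF]
    simp only [hg, map_mul, map_add, map_pow, hsp]
  rw [coeff_eq_of_mk_span_X_pow_eq hπ (by norm_num)]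
  simp only [p]
  ring_nf
  simp [coeff_X, ← map_ofNat C]

/-- The generating function of modular noncrossing diagrams
differs from the `k > 2` formula evaluated at `k = 2`. -/
theorem modular_gf_two_ne :
    (PowerSeries.mk fun n => (Qk 2 n : ℚ)) ≠
      (1 - X ^ 2 + X ^ 4) *
        (1 - X - X ^ 2 + X ^ 3 + 2 * X ^ 4 + X ^ 6 - X ^ 8 + X ^ 10 - X ^ 12 :
          PowerSeries ℚ)⁻¹ *
        FkComp 2
          (X ^ 4 * (1 - X ^ 2 - X ^ 4 + 2 * X ^ 6 - X ^ 8) *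
            ((1 - X - X ^ 2 + X ^ 3 + 2 * X ^ 4 + X ^ 6 - X ^ 8 + X ^ 10 - X ^ 12 :
              PowerSeries ℚ)⁻¹) ^ 2) := by
  intro h
  have h8 := congrArg (coeff 8) h
  rw [coeff_mk, Qk_two_eight,
    coeff_eight_formula_of_mul_eq_one (PowerSeries.mul_inv_cancel _ (by simp))] at h8
  norm_num at h8

end ModularDiagrams
end
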